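/- Let z̄ = (x̄,ȳ) ∈ ℝ^m × S^n and let p be the positive inertia index of G(z̄). If the W-SOC holds at z̄, then there exists an open neighborhood U of z̄ in ℝ^m × S^n such that the W-SOC holds at every z ∈ U for which the positive inertia index of G(z) equals p. -/

import Mathlib

open scoped Classical RealInnerProductSpace
open Matrix Set

noncomputable section

abbrev Mat (n : ℕ) : Type := Matrix (Fin n) (Fin n) ℝ

abbrev Em (m : ℕ) : Type := EuclideanSpace ℝ (Fin m)

attribute [instance] Matrix.frobeniusNormedAddCommGroup Matrix.frobeniusNormedSpace

/-- The trace (Frobenius) inner product `⟨A,B⟩ = tr(AᵀB)` on matrices; for symmetric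
matrices this is `tr(AB)`. -/
def minner {n : ℕ} (A B : Mat n) : ℝ := (Aᵀ * B).trace

/-- `P` is an orthogonal matrix. -/
def IsOrthoMat {n : ℕ} (P : Mat n) : Prop := P * Pᵀ = 1 ∧ Pᵀ * P = 1

/-- `(P, lam)` is an eigenvalue decomposition of `A` with orthogonal `P` and
nonincreasing eigenvalue vector `lam`: `A = P·Diag(lam)·Pᵀ`. -/
def IsEigDecomp {n : ℕ} (A P : Mat n) (lam : Fin n → ℝ) : Prop :=
  IsOrthoMat P ∧ Antitone lam ∧ A = P * Matrix.diagonal lam * Pᵀ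

/-- The stratum `M_{p,q}` of symmetric matrices with exactly `p` positive and `q` negative
eigenvalues. -/
def stratum (n p q : ℕ) : Set (Mat n) :=
  {A | ∃ P lam, IsEigDecomp A P lam ∧
    {i : Fin n | 0 < lam i}.ncard = p ∧ {i : Fin n | lam i < 0}.ncard = q}

/-- The metric projection `Π₊` onto the positive semidefinite cone (defined through an
eigenvalue decomposition; the value is independent of the choice of decomposition). -/
noncomputable def piPlus {n : ℕ} (A : Mat n) : Mat n :=
  if h : ∃ P lam, IsEigDecomp A P lam then
    h.choose * Matrix.diagonal (fun i => max (h.choose_spec.choose i) 0) * h.chooseᵀ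
  else 0

variable {m n : ℕ}

/-- `G(z) = g(x) + y`. -/
def Gmap (g : Em m → Mat n) (z : Em m × Mat n) : Mat n := g z.1 + z.2

/-- The adjoint `∇g(x) : Sⁿ → ℝᵐ` of the derivative `g'(x)`, characterized by
`⟨∇g(x)H, v⟩ = ⟨H, g'(x)v⟩`. -/
def gradg (g : Em m → Mat n) (x : Em m) (H : Mat n) : Em m :=
  (EuclideanSpace.equiv (Fin m) ℝ).symm
    fun k => (Hᵀ * fderiv ℝ g x (EuclideanSpace.single k 1)).trace

/-- The Lagrangian `L(x,y) = f(x) + ⟨y, g(x)⟩`. -/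
def Lfun (f : Em m → ℝ) (g : Em m → Mat n) (x : Em m) (y : Mat n) : ℝ :=
  f x + minner y (g x)

/-- The Hessian `∇²ₓₓL(x,y)` of `x ↦ L(x,y)`, as a continuous linear map `ℝᵐ → ℝᵐ`. -/
def hessL (f : Em m → ℝ) (g : Em m → Mat n) (x : Em m) (y : Mat n) : Em m →L[ℝ] Em m :=
  fderiv ℝ (fun u => gradient (fun w => Lfun f g w y) u) x

/-- The KKT mapping `F(z) = (∇f(x) + ∇g(x)y, −g(x) + Π₊(G(z)))`. -/
def KKTF (f : Em m → ℝ) (g : Em m → Mat n) (z : Em m × Mat n) : Em m × Mat n :=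
  (gradient f z.1 + gradg g z.1 z.2, - g z.1 + piPlus (Gmap g z))

/-- The lifted stratum `M̃_{p,q} = {z = (x,y) ∈ ℝᵐ × Sⁿ : G(z) ∈ M_{p,q}}`. -/
def lstratum (g : Em m → Mat n) (p q : ℕ) : Set (Em m × Mat n) :=
  {z | z.2.IsSymm ∧ Gmap g z ∈ stratum n p q}

/-- The norm `‖(u,H)‖ = sqrt(‖u‖² + ‖H‖²)` on `ℝᵐ × Sⁿ` (Frobenius norm on matrices). -/
def pnorm {m n : ℕ} (w : Em m × Mat n) : ℝ := Real.sqrt (‖w.1‖ ^ 2 + ‖w.2‖ ^ 2)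

/-- The weak strict Robinson constraint qualification (W-SRCQ) at `z`:
`g'(x)[ℝᵐ] + {PBPᵀ : B ∈ Sⁿ, B_{βγ} = 0, B_{γγ} = 0} = Sⁿ`
(for any eigenvalue decomposition `(P, lam)` of `G(z)`; independent of the choice). -/
def WSRCQ (g : Em m → Mat n) (z : Em m × Mat n) : Prop :=
  ∀ P lam, IsEigDecomp (Gmap g z) P lam →
    ∀ C : Mat n, C.IsSymm →
      ∃ (v : Em m) (B : Mat n), B.IsSymm ∧
        (∀ i j, lam i = 0 → lam j < 0 → B i j = 0) ∧
        (∀ i j, lam i < 0 → lam j < 0 → B i j = 0) ∧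
        C = fderiv ℝ g z.1 v + P * B * Pᵀ

/-- The constraint nondegeneracy at `z`:
`g'(x)[ℝᵐ] + {PBPᵀ : B ∈ Sⁿ, B_{ββ} = 0, B_{βγ} = 0, B_{γγ} = 0} = Sⁿ`. -/
def CNondeg (g : Em m → Mat n) (z : Em m × Mat n) : Prop :=
  ∀ P lam, IsEigDecomp (Gmap g z) P lam →
    ∀ C : Mat n, C.IsSymm →
      ∃ (v : Em m) (B : Mat n), B.IsSymm ∧
        (∀ i j, lam i = 0 → lam j = 0 → B i j = 0) ∧
        (∀ i j, lam i = 0 → lam j < 0 → B i j = 0) ∧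
        (∀ i j, lam i < 0 → lam j < 0 → B i j = 0) ∧
        C = fderiv ℝ g z.1 v + P * B * Pᵀ

/-- The strict Robinson constraint qualification (SRCQ) at a KKT pair `z`:
`g'(x)[ℝᵐ] + {PBPᵀ : B ∈ Sⁿ, B_{ββ} ⪰ 0, B_{βγ} = 0, B_{γγ} = 0} = Sⁿ`. -/
def SRCQ (g : Em m → Mat n) (z : Em m × Mat n) : Prop :=
  ∀ P lam, IsEigDecomp (Gmap g z) P lam →
    ∀ C : Mat n, C.IsSymm →
      ∃ (v : Em m) (B : Mat n), B.IsSymm ∧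
        (∀ u : Fin n → ℝ, (∀ i, lam i ≠ 0 → u i = 0) →
          0 ≤ ∑ i, ∑ j, u i * B i j * u j) ∧
        (∀ i j, lam i = 0 → lam j < 0 → B i j = 0) ∧
        (∀ i j, lam i < 0 → lam j < 0 → B i j = 0) ∧
        C = fderiv ℝ g z.1 v + P * B * Pᵀ

/-- The quadratic form
`Q(z,v) = ⟨v, ∇²ₓₓL(x,y)v⟩ + 2·Σ_{i∈α}Σ_{j∈γ} (−λⱼ/λᵢ)·([Pᵀ(g'(x)v)P]_{ij})²`. -/
def Qform (f : Em m → ℝ) (g : Em m → Mat n) (z : Em m × Mat n)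
    (P : Mat n) (lam : Fin n → ℝ) (v : Em m) : ℝ :=
  ⟪v, hessL f g z.1 z.2 v⟫ +
    2 * ∑ i : Fin n, ∑ j : Fin n,
      (if 0 < lam i ∧ lam j < 0 then
        (-lam j / lam i) * ((Pᵀ * fderiv ℝ g z.1 v * P) i j) ^ 2 else 0)

/-- `v ∈ appl(z)`: the blocks `ββ`, `βγ`, `γγ` of `Pᵀ(g'(x)v)P` vanish. -/
def memAppl (g : Em m → Mat n) (z : Em m × Mat n)
    (P : Mat n) (lam : Fin n → ℝ) (v : Em m) : Prop :=
  (∀ i j, lam i = 0 → lam j = 0 → (Pᵀ * fderiv ℝ g z.1 v * P) i j = 0) ∧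
  (∀ i j, lam i = 0 → lam j < 0 → (Pᵀ * fderiv ℝ g z.1 v * P) i j = 0) ∧
  (∀ i j, lam i < 0 → lam j < 0 → (Pᵀ * fderiv ℝ g z.1 v * P) i j = 0)

/-- `v ∈ app(z)`: the blocks `βγ`, `γγ` of `Pᵀ(g'(x)v)P` vanish. -/
def memApp (g : Em m → Mat n) (z : Em m × Mat n)
    (P : Mat n) (lam : Fin n → ℝ) (v : Em m) : Prop :=
  (∀ i j, lam i = 0 → lam j < 0 → (Pᵀ * fderiv ℝ g z.1 v * P) i j = 0) ∧
  (∀ i j, lam i < 0 → lam j < 0 → (Pᵀ * fderiv ℝ g z.1 v * P) i j = 0)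

/-- The weak second order condition (W-SOC) at `z`: `Q(z,v) ≠ 0` for every nonzero
`v ∈ appl(z)`. -/
def WSOC (f : Em m → ℝ) (g : Em m → Mat n) (z : Em m × Mat n) : Prop :=
  ∀ P lam, IsEigDecomp (Gmap g z) P lam →
    ∀ v : Em m, v ≠ 0 → memAppl g z P lam v → Qform f g z P lam v ≠ 0

/-- The strong second order sufficient condition (S-SOSC) at `z`: `Q(z,v) > 0` for every
nonzero `v ∈ app(z)`. -/
def SSOSC (f : Em m → ℝ) (g : Em m → Mat n) (z : Em m × Mat n) : Prop :=
  ∀ P lam, IsEigDecomp (Gmap g z) P lam →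
    ∀ v : Em m, v ≠ 0 → memApp g z P lam v → 0 < Qform f g z P lam v

/-- The second order necessary condition (SONC) at `z`. -/
def SONC (f : Em m → ℝ) (g : Em m → Mat n) (z : Em m × Mat n) : Prop :=
  ∀ P lam, IsEigDecomp (Gmap g z) P lam →
    ∀ v : Em m, v ≠ 0 →
      (∀ u : Fin n → ℝ, (∀ i, lam i ≠ 0 → u i = 0) →
        0 ≤ ∑ i, ∑ j, u i * (Pᵀ * fderiv ℝ g z.1 v * P) i j * u j) →
      memApp g z P lam v → 0 ≤ Qform f g z P lam v

/-- The W-SOC holds uniformly on a set `S`: there is `c > 0` with `Q(z,v) ≥ c‖v‖²` for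
every `z ∈ S` (in `ℝᵐ × Sⁿ`) and every `v ∈ appl(z)`. -/
def UnifWSOC (f : Em m → ℝ) (g : Em m → Mat n) (S : Set (Em m × Mat n)) : Prop :=
  ∃ c : ℝ, 0 < c ∧ ∀ z ∈ S, z.2.IsSymm →
    ∀ P lam, IsEigDecomp (Gmap g z) P lam →
      ∀ v : Em m, memAppl g z P lam v → c * ‖v‖ ^ 2 ≤ Qform f g z P lam v

/-- `H ∈ T_z`: `H ∈ Sⁿ` with `(PᵀHP)_{ββ} = 0`. -/
def memTz {n : ℕ} (P : Mat n) (lam : Fin n → ℝ) (H : Mat n) : Prop :=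
  H.IsSymm ∧ ∀ i j, lam i = 0 → lam j = 0 → (Pᵀ * H * P) i j = 0

/-- `Δ ∈ N_{G(z)}M_{p,q}`: `Δ ∈ Sⁿ` and `(PᵀΔP)_{ij} = 0` whenever `i ∉ β` or `j ∉ β`. -/
def memNormal {n : ℕ} (P : Mat n) (lam : Fin n → ℝ) (Δ : Mat n) : Prop :=
  Δ.IsSymm ∧ ∀ i j, (lam i ≠ 0 ∨ lam j ≠ 0) → (Pᵀ * Δ * P) i j = 0

/-- The map `ξ_z : T_z → Sⁿ`, `ξ_z(H) = P·M·Pᵀ`. -/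
def xiMap {n : ℕ} (P : Mat n) (lam : Fin n → ℝ) (H : Mat n) : Mat n :=
  P * (Matrix.of fun i j =>
    if 0 < lam i ∧ 0 < lam j then (Pᵀ * H * P) i j
    else if 0 < lam i ∧ lam j = 0 then (Pᵀ * H * P) i j
    else if lam i = 0 ∧ 0 < lam j then (Pᵀ * H * P) i j
    else if 0 < lam i ∧ lam j < 0 then (lam i / (lam i - lam j)) * (Pᵀ * H * P) i j
    else if lam i < 0 ∧ 0 < lam j then (lam j / (lam j - lam i)) * (Pᵀ * H * P) i j
    else 0) * Pᵀ

/-- The linear map `𝒜_z(v,H) = (∇²ₓₓL(x,y)v − ∇g(x)(g'(x)v) + ∇g(x)H, −g'(x)v + ξ_z(H))`. -/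
def Amap (f : Em m → ℝ) (g : Em m → Mat n) (z : Em m × Mat n)
    (P : Mat n) (lam : Fin n → ℝ) (v : Em m) (H : Mat n) : Em m × Mat n :=
  (hessL f g z.1 z.2 v - gradg g z.1 (fderiv ℝ g z.1 v) + gradg g z.1 H,
    - fderiv ℝ g z.1 v + xiMap P lam H)

/-- The positive inertia index of `A` is `p`. -/
def posInertiaIs {n : ℕ} (A : Mat n) (p : ℕ) : Prop :=
  ∃ P lam, IsEigDecomp A P lam ∧ {i : Fin n | 0 < lam i}.ncard = p

/-- The negative inertia index of `A` is `q`. -/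
def negInertiaIs {n : ℕ} (A : Mat n) (q : ℕ) : Prop :=
  ∃ P lam, IsEigDecomp A P lam ∧ {i : Fin n | lam i < 0}.ncard = q

end

/-! If the W-SOC failed at points `z_k → z̄` with `G(z_k)` of positive inertia index `p`, there
would be eigenvalue decompositions `(P_k, λ_k)` of `G(z_k)` and unit vectors `v_k ∈ appl(z_k)`
with `Q(z_k, v_k) = 0`. Orthogonal matrices form a compact set, so along a subsequence
`P_k → P̄` and `v_k → v̄`; then `λ_k = diag(P_kᵀ G(z_k) P_k)` converges, and the limit is an
eigenvalue decomposition of `G(z̄)`. Because the eigenvalues are ordered and the positive inertia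
index is `p` throughout, the positive eigenvalues are exactly the first `p` ones, for every `k` and
in the limit. Hence membership in `appl` becomes the closed condition that `Pᵀ(g'(x)v)P` vanishes
outside the first `p` rows and columns (using its symmetry), and the weights `-λ_j / λ_i` of `Q`
become `max(-λ_j, 0) / λ_i` with `λ_i > 0`, which are continuous. So `v̄ ∈ appl(z̄)` and
`Q(z̄, v̄) = 0`, contradicting the W-SOC at `z̄`. -/

open Filter Topology Polynomial

-- Instance search sees the product topology on `Mat n`, which agrees with the Frobenius one
-- only after unfolding, and so misses this instance.
instance instFirstCountableTopologyMat {n : ℕ} : FirstCountableTopology (Mat n) :=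
  inferInstanceAs (FirstCountableTopology (Fin n → Fin n → ℝ))

theorem Filter.Tendsto.matrix_apply {ι α β R : Type*} [TopologicalSpace R] {l : Filter ι}
    {M : ι → Matrix α β R} {M₀ : Matrix α β R} (h : Tendsto M l (𝓝 M₀)) (i : α) (j : β) :
    Tendsto (fun k => M k i j) l (𝓝 (M₀ i j)) :=
  ((show Continuous fun M : Matrix α β R => M i j by fun_prop).tendsto M₀).comp h

theorem Matrix.IsSymm.transpose_mul_mul {ι R : Type*} [Fintype ι] [CommSemiring R]
    {M : Matrix ι ι R} (h : M.IsSymm) (P : Matrix ι ι R) : (Pᵀ * M * P).IsSymm := by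
  simp only [IsSymm, Matrix.transpose_mul, Matrix.transpose_transpose, h.eq, Matrix.mul_assoc]

section Orthogonal

variable {n : ℕ} {P : Mat n}

theorem IsOrthoMat.abs_apply_le_one (h : IsOrthoMat P) (i j : Fin n) : |P i j| ≤ 1 := by
  have hrow : ∑ k, P i k ^ 2 = 1 := by
    simpa [Matrix.mul_apply, sq] using congrFun (congrFun h.1 i) i
  rw [← sq_le_one_iff_abs_le_one, ← hrow]
  exact Finset.single_le_sum (fun k _ => sq_nonneg (P i k)) (Finset.mem_univ j)

theorem isCompact_setOf_isOrthoMat : IsCompact {P : Mat n | IsOrthoMat P} := by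
  have hbox : IsCompact (Set.pi univ fun _ => Set.pi univ fun _ => Icc (-1 : ℝ) 1 : Set (Mat n)) :=
    isCompact_univ_pi fun _ => isCompact_univ_pi fun _ => isCompact_Icc
  refine hbox.of_isClosed_subset
    ((isClosed_eq (by fun_prop) (by fun_prop)).inter (isClosed_eq (by fun_prop) (by fun_prop)))
    fun P hP i _ j _ => abs_le.mp (hP.abs_apply_le_one i j)

end Orthogonal

theorem isClosed_setOf_isEigDecomp {n : ℕ} :
    IsClosed {x : Mat n × Mat n × (Fin n → ℝ) | IsEigDecomp x.1 x.2.1 x.2.2} :=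
  ((isClosed_eq (by fun_prop) (by fun_prop)).inter (isClosed_eq (by fun_prop) (by fun_prop))).inter
    ((isClosed_antitone.preimage (by fun_prop)).inter (isClosed_eq (by fun_prop) (by fun_prop)))

namespace IsEigDecomp

variable {n : ℕ} {A P P' : Mat n} {lam lam' : Fin n → ℝ}

theorem charpoly_eq (h : IsEigDecomp A P lam) : A.charpoly = ∏ i, (X - C (lam i)) := by
  rw [h.2.2, charpoly_mul_comm, ← Matrix.mul_assoc, h.1.2, Matrix.one_mul, charpoly_diagonal]

theorem eigenvalues_unique (h : IsEigDecomp A P lam) (h' : IsEigDecomp A P' lam') :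
    lam = lam' := by
  have hroots := congrArg Polynomial.roots (h.charpoly_eq.symm.trans h'.charpoly_eq)
  rw [roots_prod _ _ (by simp [Finset.prod_ne_zero_iff, X_sub_C_ne_zero]),
    roots_prod _ _ (by simp [Finset.prod_ne_zero_iff, X_sub_C_ne_zero])] at hroots
  simp only [roots_X_sub_C, Multiset.bind_singleton, Fin.univ_val_map, Multiset.coe_eq_coe]
    at hroots
  exact List.ofFn_injective (hroots.eq_of_sortedGE h.2.1.sortedGE_ofFn h'.2.1.sortedGE_ofFn)

theorem eigenvalue_eq_diag (h : IsEigDecomp A P lam) (a : Fin n) : lam a = (Pᵀ * A * P) a a := by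
  rw [h.2.2, show Pᵀ * (P * diagonal lam * Pᵀ) * P = (Pᵀ * P) * diagonal lam * (Pᵀ * P) by
    simp only [Matrix.mul_assoc], h.1.2, Matrix.one_mul, Matrix.mul_one, diagonal_apply_eq]

theorem pos_iff_lt {p : ℕ} (h : IsEigDecomp A P lam) (hp : posInertiaIs A p) (i : Fin n) :
    0 < lam i ↔ (i : ℕ) < p := by
  obtain ⟨Q, mu, hQ, rfl⟩ := hp
  rw [h.eigenvalues_unique hQ, Set.ncard_eq_toFinset_card', Set.toFinset_ofPred,
    Tuple.lt_card_gt_iff_apply_gt_of_antitone hQ.2.1]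

theorem of_tendsto {A P : ℕ → Mat n} {lam : ℕ → Fin n → ℝ} {A₀ P₀ : Mat n}
    (hA : Tendsto A atTop (𝓝 A₀)) (hP : Tendsto P atTop (𝓝 P₀))
    (h : ∀ k, IsEigDecomp (A k) (P k) (lam k)) :
    ∃ lam₀, Tendsto lam atTop (𝓝 lam₀) ∧ IsEigDecomp A₀ P₀ lam₀ := by
  have hlam : Tendsto lam atTop (𝓝 fun a => (P₀ᵀ * A₀ * P₀) a a) := by
    have hc : Continuous fun x : Mat n × Mat n => fun a => (x.2ᵀ * x.1 * x.2) a a := by fun_prop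
    refine ((hc.tendsto _).comp (hA.prodMk_nhds hP)).congr fun k => ?_
    funext a
    exact ((h k).eigenvalue_eq_diag a).symm
  exact ⟨_, hlam, isClosed_setOf_isEigDecomp.mem_of_tendsto
    (hA.prodMk_nhds (hP.prodMk_nhds hlam)) (Eventually.of_forall h)⟩

end IsEigDecomp

section Calculus

variable {m n : ℕ} {f : Em m → ℝ} {g : Em m → Mat n}

noncomputable def minnerCLM (y : Mat n) : Mat n →L[ℝ] ℝ :=
  LinearMap.toContinuousLinearMap
    ((Matrix.traceLinearMap (Fin n) ℝ ℝ).comp (LinearMap.mulLeft ℝ yᵀ))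

theorem minnerCLM_apply (y M : Mat n) : minnerCLM y M = minner y M := rfl

theorem fderiv_Lfun (hf : Differentiable ℝ f) (hg : Differentiable ℝ g) (y : Mat n) (u : Em m) :
    fderiv ℝ (fun w => Lfun f g w y) u = fderiv ℝ f u + (minnerCLM y).comp (fderiv ℝ g u) :=
  ((hf u).hasFDerivAt.add ((minnerCLM y).hasFDerivAt.comp u (hg u).hasFDerivAt)).fderiv

theorem hessL_apply (hf : ContDiff ℝ 2 f) (hg : ContDiff ℝ 2 g) (x : Em m) (y : Mat n)
    (v : Em m) :
    hessL f g x y v = (InnerProductSpace.toDual ℝ (Em m)).symm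
      (fderiv ℝ (fderiv ℝ f) x v + (minnerCLM y).comp (fderiv ℝ (fderiv ℝ g) x v)) := by
  set J := (InnerProductSpace.toDual ℝ (Em m)).symm
  have hf1 : Differentiable ℝ (fderiv ℝ f) :=
    (hf.fderiv_right (m := 1) le_rfl).differentiable one_ne_zero
  have hg1 : Differentiable ℝ (fderiv ℝ g) :=
    (hg.fderiv_right (m := 1) le_rfl).differentiable one_ne_zero
  have hgrad : (fun u => gradient (fun w => Lfun f g w y) u) =
      fun u => J (fderiv ℝ f u + (minnerCLM y).comp (fderiv ℝ g u)) := by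
    funext u
    rw [gradient, fderiv_Lfun (hf.differentiable two_ne_zero) (hg.differentiable two_ne_zero)]
  have hD := J.toContinuousLinearEquiv.hasFDerivAt.comp x ((hf1 x).hasFDerivAt.add
    ((ContinuousLinearMap.compL ℝ (Em m) (Mat n) ℝ (minnerCLM y)).hasFDerivAt.comp x
      (hg1 x).hasFDerivAt))
  rw [hessL, hgrad]
  exact congrArg (· v) hD.fderiv

theorem continuous_hessL_apply (hf : ContDiff ℝ 2 f) (hg : ContDiff ℝ 2 g) :
    Continuous fun w : (Em m × Mat n) × Em m => hessL f g w.1.1 w.1.2 w.2 := by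
  have hf2 : Continuous (fderiv ℝ (fderiv ℝ f)) :=
    (hf.fderiv_right (m := 1) le_rfl).continuous_fderiv one_ne_zero
  have hg2 : Continuous (fderiv ℝ (fderiv ℝ g)) :=
    (hg.fderiv_right (m := 1) le_rfl).continuous_fderiv one_ne_zero
  simp only [hessL_apply hf hg]
  refine (LinearIsometryEquiv.continuous _).comp (continuous_clm_apply.mpr fun u => ?_)
  simp only [_root_.add_apply, ContinuousLinearMap.comp_apply, minnerCLM_apply, minner]
  fun_prop

theorem fderiv_apply_isSymm (hg : Differentiable ℝ g) (hgs : ∀ x, (g x).IsSymm) (x v : Em m) :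
    (fderiv ℝ g x v).IsSymm := by
  let T : Mat n →L[ℝ] Mat n :=
    LinearMap.toContinuousLinearMap (Matrix.transposeLinearEquiv (Fin n) (Fin n) ℝ ℝ).toLinearMap
  have h := (T.hasFDerivAt.comp x (hg x).hasFDerivAt).fderiv
  rw [show T ∘ g = g from funext hgs] at h
  exact (congrArg (· v) h).symm

end Calculus

section SecondOrder

variable {m n p : ℕ} {f : Em m → ℝ} {g : Em m → Mat n} {z : Em m × Mat n} {P : Mat n}
  {lam : Fin n → ℝ} {v : Em m}

theorem memAppl_smul (c : ℝ) (h : memAppl g z P lam v) : memAppl g z P lam (c • v) := by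
  obtain ⟨hββ, hβγ, hγγ⟩ := h
  simp only [memAppl, map_smul, Matrix.mul_smul, Matrix.smul_mul, Matrix.smul_apply, smul_eq_mul,
    mul_eq_zero]
  exact ⟨fun i j hi hj => Or.inr (hββ i j hi hj), fun i j hi hj => Or.inr (hβγ i j hi hj),
    fun i j hi hj => Or.inr (hγγ i j hi hj)⟩

theorem Qform_smul (c : ℝ) : Qform f g z P lam (c • v) = c ^ 2 * Qform f g z P lam v := by
  simp only [Qform, map_smul, Matrix.mul_smul, Matrix.smul_mul, Matrix.smul_apply, smul_eq_mul,
    real_inner_smul_left, real_inner_smul_right, Finset.mul_sum, mul_add]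
  congr 1
  · ring
  · refine Finset.sum_congr rfl fun i _ => Finset.sum_congr rfl fun j _ => ?_
    split_ifs <;> ring

theorem exists_norm_eq_one_of_not_WSOC (h : ¬ WSOC f g z) :
    ∃ P lam v, IsEigDecomp (Gmap g z) P lam ∧ ‖v‖ = 1 ∧ memAppl g z P lam v ∧
      Qform f g z P lam v = 0 := by
  simp only [WSOC, not_forall, not_not] at h
  obtain ⟨P, lam, hdec, v, hv, happl, hQ⟩ := h
  refine ⟨P, lam, ‖v‖⁻¹ • v, hdec, ?_, memAppl_smul _ happl, by rw [Qform_smul, hQ, mul_zero]⟩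
  rw [norm_smul, norm_inv, norm_norm, inv_mul_cancel₀ (norm_ne_zero_iff.mpr hv)]

theorem memAppl_iff_of_pos_iff (hpos : ∀ i, 0 < lam i ↔ (i : ℕ) < p)
    (hE : (Pᵀ * fderiv ℝ g z.1 v * P).IsSymm) :
    memAppl g z P lam v ↔
      ∀ i j : Fin n, p ≤ (i : ℕ) → p ≤ (j : ℕ) → (Pᵀ * fderiv ℝ g z.1 v * P) i j = 0 := by
  have hnonpos : ∀ i : Fin n, lam i ≤ 0 ↔ p ≤ (i : ℕ) := fun i => by
    rw [← not_lt, hpos, not_lt]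
  constructor
  · rintro ⟨hββ, hβγ, hγγ⟩ i j hi hj
    rcases ((hnonpos i).mpr hi).lt_or_eq with hi | hi <;>
      rcases ((hnonpos j).mpr hj).lt_or_eq with hj | hj
    · exact hγγ i j hi hj
    · rw [← hE.apply]; exact hβγ j i hj hi
    · exact hβγ i j hi hj
    · exact hββ i j hi hj
  · intro h
    exact ⟨fun i j hi hj => h i j ((hnonpos i).mp hi.le) ((hnonpos j).mp hj.le),
      fun i j hi hj => h i j ((hnonpos i).mp hi.le) ((hnonpos j).mp hj.le),
      fun i j hi hj => h i j ((hnonpos i).mp hi.le) ((hnonpos j).mp hj.le)⟩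

theorem Qform_eq_of_pos_iff (hpos : ∀ i, 0 < lam i ↔ (i : ℕ) < p) :
    Qform f g z P lam v = ⟪v, hessL f g z.1 z.2 v⟫ + 2 * ∑ i : Fin n, ∑ j : Fin n,
      if (i : ℕ) < p then max (-lam j) 0 / lam i * ((Pᵀ * fderiv ℝ g z.1 v * P) i j) ^ 2
      else 0 := by
  unfold Qform
  congr 2
  refine Finset.sum_congr rfl fun i _ => Finset.sum_congr rfl fun j _ => ?_
  by_cases hi : 0 < lam i
  · by_cases hj : lam j < 0
    · simp [hi, (hpos i).mp hi, hj, max_eq_left (neg_nonneg.mpr hj.le)]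
    · simp [hi, (hpos i).mp hi, hj, max_eq_right (neg_nonpos.mpr (not_lt.mp hj))]
  · simp [hi, mt (hpos i).mpr hi]

end SecondOrder

section Limits

variable {m n p : ℕ} {f : Em m → ℝ} {g : Em m → Mat n} {z : ℕ → Em m × Mat n} {P : ℕ → Mat n}
  {lam : ℕ → Fin n → ℝ} {v : ℕ → Em m} {z₀ : Em m × Mat n} {P₀ : Mat n} {lam₀ : Fin n → ℝ}
  {v₀ : Em m}

theorem tendsto_conj_fderiv (hg : ContDiff ℝ 1 g) (hz : Tendsto z atTop (𝓝 z₀))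
    (hP : Tendsto P atTop (𝓝 P₀)) (hv : Tendsto v atTop (𝓝 v₀)) :
    Tendsto (fun k => (P k)ᵀ * fderiv ℝ g (z k).1 (v k) * P k) atTop
      (𝓝 (P₀ᵀ * fderiv ℝ g z₀.1 v₀ * P₀)) := by
  have hg' : Continuous (fderiv ℝ g) := hg.continuous_fderiv one_ne_zero
  have hc : Continuous fun w : Em m × Mat n × Em m => w.2.1ᵀ * fderiv ℝ g w.1 w.2.2 * w.2.1 :=
    (continuous_snd.fst.matrix_transpose.matrix_mul
      ((hg'.comp continuous_fst).clm_apply continuous_snd.snd)).matrix_mul continuous_snd.fst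
  have hw : Tendsto (fun k => ((z k).1, P k, v k)) atTop (𝓝 (z₀.1, P₀, v₀)) :=
    hz.fst_nhds.prodMk_nhds (hP.prodMk_nhds hv)
  -- Elaborated before comparing with the goal: unifying against the goal first times out.
  exact (hc.continuousAt.tendsto.comp hw :)

theorem tendsto_Qform (hf : ContDiff ℝ 2 f) (hg : ContDiff ℝ 2 g) (hz : Tendsto z atTop (𝓝 z₀))
    (hP : Tendsto P atTop (𝓝 P₀)) (hlam : Tendsto lam atTop (𝓝 lam₀))
    (hv : Tendsto v atTop (𝓝 v₀)) (hpos : ∀ k i, 0 < lam k i ↔ (i : ℕ) < p)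
    (hpos₀ : ∀ i, 0 < lam₀ i ↔ (i : ℕ) < p) :
    Tendsto (fun k => Qform f g (z k) (P k) (lam k) (v k)) atTop
      (𝓝 (Qform f g z₀ P₀ lam₀ v₀)) := by
  simp only [Qform_eq_of_pos_iff (hpos _), Qform_eq_of_pos_iff hpos₀]
  have hH := ((continuous_hessL_apply hf hg).tendsto _).comp (hz.prodMk_nhds hv)
  have hE := tendsto_conj_fderiv (hg.of_le one_le_two) hz hP hv
  have hlam' : ∀ a, Tendsto (fun k => lam k a) atTop (𝓝 (lam₀ a)) := tendsto_pi_nhds.mp hlam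
  refine (hv.inner hH).add (tendsto_const_nhds.mul
    (tendsto_finsetSum _ fun i _ => tendsto_finsetSum _ fun j _ => ?_))
  split_ifs with hi
  · exact (((hlam' j).neg.max tendsto_const_nhds).div (hlam' i) ((hpos₀ i).mpr hi).ne').mul
      ((hE.matrix_apply i j).pow 2)
  · exact tendsto_const_nhds

theorem not_WSOC_of_tendsto (hf : ContDiff ℝ 2 f) (hg : ContDiff ℝ 2 g)
    (hgs : ∀ x, (g x).IsSymm) (hz : Tendsto z atTop (𝓝 z₀)) (hP : Tendsto P atTop (𝓝 P₀))
    (hv : Tendsto v atTop (𝓝 v₀)) (hv₀ : v₀ ≠ 0) (hp₀ : posInertiaIs (Gmap g z₀) p)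
    (hp : ∀ k, posInertiaIs (Gmap g (z k)) p)
    (hdec : ∀ k, IsEigDecomp (Gmap g (z k)) (P k) (lam k))
    (happl : ∀ k, memAppl g (z k) (P k) (lam k) (v k))
    (hQ : ∀ k, Qform f g (z k) (P k) (lam k) (v k) = 0) :
    ¬ WSOC f g z₀ := by
  have hG : Continuous (Gmap g) := (hg.continuous.comp continuous_fst).add continuous_snd
  obtain ⟨lam₀, hlam, hdec₀⟩ := IsEigDecomp.of_tendsto (hG.continuousAt.tendsto.comp hz) hP hdec
  have hpos : ∀ k i, 0 < lam k i ↔ (i : ℕ) < p := fun k => (hdec k).pos_iff_lt (hp k)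
  have hpos₀ := hdec₀.pos_iff_lt hp₀
  have hsymm : ∀ x P v, (Pᵀ * fderiv ℝ g x v * P).IsSymm := fun x P v =>
    (fderiv_apply_isSymm (hg.differentiable two_ne_zero) hgs x v).transpose_mul_mul P
  have hE := tendsto_conj_fderiv (hg.of_le one_le_two) hz hP hv
  have happl₀ : memAppl g z₀ P₀ lam₀ v₀ := by
    rw [memAppl_iff_of_pos_iff hpos₀ (hsymm _ _ _)]
    intro i j hi hj
    refine tendsto_nhds_unique (hE.matrix_apply i j) (tendsto_const_nhds.congr fun k => ?_)
    exact ((memAppl_iff_of_pos_iff (hpos k) (hsymm _ _ _)).mp (happl k) i j hi hj).symm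
  have hQ₀ : Qform f g z₀ P₀ lam₀ v₀ = 0 :=
    tendsto_nhds_unique (tendsto_Qform hf hg hz hP hlam hv hpos hpos₀) (by simp [hQ])
  exact fun hW => hW P₀ lam₀ hdec₀ v₀ hv₀ happl₀ hQ₀

end Limits

theorem WSOC_open_fixed_positive_inertia_general {m n p : ℕ}
    (f : Em m → ℝ) (g : Em m → Mat n)
    (hf : ContDiff ℝ 2 f) (hg : ContDiff ℝ 2 g) (hgs : ∀ x, (g x).IsSymm)
    (zbar : Em m × Mat n)
    (hp : posInertiaIs (Gmap g zbar) p)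
    (hW : WSOC f g zbar) :
    ∃ U : Set (Em m × Mat n), IsOpen U ∧ zbar ∈ U ∧
      ∀ z ∈ U, z.2.IsSymm → posInertiaIs (Gmap g z) p → WSOC f g z := by
  suffices ∀ᶠ z in 𝓝 zbar, posInertiaIs (Gmap g z) p → WSOC f g z by
    obtain ⟨U, hU, hUo, hzU⟩ := eventually_nhds_iff.mp this
    exact ⟨U, hUo, hzU, fun z hz _ => hU z hz⟩
  by_contra hbad
  obtain ⟨z, hz, hzbad⟩ := frequently_iff_seq_forall.mp (not_eventually.mp hbad)
  simp only [Classical.not_imp] at hzbad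
  choose P lam v hdec hv happl hQ using fun k => exists_norm_eq_one_of_not_WSOC (hzbad k).2
  obtain ⟨⟨P₀, v₀⟩, ⟨-, hv₀⟩, φ, hφ, hlim⟩ :=
    (isCompact_setOf_isOrthoMat.prod (isCompact_sphere (0 : Em m) 1)).tendsto_subseq
      (x := fun k => (P k, v k)) fun k => ⟨(hdec k).1, by simpa using hv k⟩
  exact not_WSOC_of_tendsto hf hg hgs (hz.comp hφ.tendsto_atTop) hlim.fst_nhds hlim.snd_nhds
    (ne_zero_of_mem_unit_sphere ⟨v₀, hv₀⟩) hp (fun k => (hzbad (φ k)).1) (fun k => hdec (φ k))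
    (fun k => happl (φ k)) (fun k => hQ (φ k)) hW

/-- Openness of the W-SOC along points with the same positive inertia
index: if the W-SOC holds at `z̄` and `p` is the positive inertia index of `G(z̄)`, then it
holds at all nearby `z ∈ ℝᵐ × Sⁿ` whose `G(z)` has positive inertia index `p`. -/
theorem WSOC_open_fixed_positive_inertia {m n p : ℕ}
    (f : Em m → ℝ) (g : Em m → Mat n)
    (hf : ContDiff ℝ 2 f) (hg : ContDiff ℝ 2 g) (hgs : ∀ x, (g x).IsSymm)
    (zbar : Em m × Mat n) (hsym : zbar.2.IsSymm)
    (hp : posInertiaIs (Gmap g zbar) p)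
    (hW : WSOC f g zbar) :
    ∃ U : Set (Em m × Mat n), IsOpen U ∧ zbar ∈ U ∧
      ∀ z ∈ U, z.2.IsSymm → posInertiaIs (Gmap g z) p → WSOC f g z :=
  WSOC_open_fixed_positive_inertia_general f g hf hg hgs zbar hp hW
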